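/- Fix n ≥ 2 and 1 ≤ k ≤ n, and let (1^k) denote the single-column partition. For every permutation w ∈ S_n, the K-Demazure crystal SVT^n_{(i_1,…,i_ℓ)}((1^k)) is the same for all reduced words (i_1,…,i_ℓ) of w. -/

import Mathlib

/-!
For a reduced word of `w`, a column `T` lies in the K-Demazure crystal exactly when it is
dominated by the key column `A = w{1,…,k}`: writing `A = {a₁ < ⋯ < a_k}`, every entry of the
`r`-th row is at most `a_r` (`BelowKey`). This condition does not mention the word.

It is proved by induction along the word. On a single column, `(e_i^K)^max e_i^max` either does
nothing or turns the unique entry `i+1` into `i` (deleting it when its box already holds `i`).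
For the first letter `i` of a reduced word, counting inversions shows `w⁻¹(i+1) < w⁻¹(i)`, so
`i ∈ A → i+1 ∈ A`; this is exactly what makes domination of `T` by `A` equivalent to domination
of the new column by `s_i A = (s_i w){1,…,k}`.
-/

open scoped Classical

noncomputable section

namespace SVTCrystal

/-- A filling assigns to each (row, column) position (0-indexed) a finite set of entries. -/
abbrev Filling : Type := ℕ → ℕ → Finset ℕ

/-- `lam` is a partition shape with at most `n` rows. -/
def IsPartitionShape (n : ℕ) (lam : ℕ → ℕ) : Prop :=
  (∀ r, lam (r + 1) ≤ lam r) ∧ (∀ r, n ≤ r → lam r = 0)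

/-- Semistandard set-valued tableau of shape `lam` with entries in `{1,…,n}`. -/
structure IsSVT (n : ℕ) (lam : ℕ → ℕ) (t : Filling) : Prop where
  boxNonempty : ∀ r c, c < lam r → (t r c).Nonempty
  emptyOutside : ∀ r c, ¬ c < lam r → t r c = ∅
  entryBounds : ∀ r c a, a ∈ t r c → 1 ≤ a ∧ a ≤ n
  rowWeak : ∀ r c a b, a ∈ t r c → b ∈ t r (c + 1) → a ≤ b
  colStrict : ∀ r c a b, a ∈ t r c → b ∈ t (r + 1) c → a < b

/-- Semistandard Young tableau: a set-valued tableau all of whose boxes are singletons. -/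
def IsSSYT (n : ℕ) (lam : ℕ → ℕ) (t : Filling) : Prop :=
  IsSVT n lam t ∧ ∀ r c, c < lam r → (t r c).card = 1

/-- The weight: `wt n lam t j` is the number of boxes of `t` containing the entry `j`. -/
def wt (n : ℕ) (lam : ℕ → ℕ) (t : Filling) (j : ℕ) : ℕ :=
  ((Finset.range n ×ˢ Finset.range (lam 0)).filter (fun p => j ∈ t p.1 p.2)).card

/-- The excess: total number of extra entries. -/
def excess (n : ℕ) (lam : ℕ → ℕ) (t : Filling) : ℕ :=
  ∑ p ∈ Finset.range n ×ˢ Finset.range (lam 0), ((t p.1 p.2).card - 1)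

/-- Column `c` contains the entry `a`. -/
def colHas (n : ℕ) (t : Filling) (a c : ℕ) : Prop := ∃ r, r < n ∧ a ∈ t r c

/-- The sign of column `c` for the `i`-signature rule: `+` (true) if the column contains `i`
but not `i+1`, `-` (false) if it contains `i+1` but not `i`. -/
def colSign (n : ℕ) (t : Filling) (i c : ℕ) : Option Bool :=
  if colHas n t i c ∧ ¬ colHas n t (i + 1) c then some true
  else if colHas n t (i + 1) c ∧ ¬ colHas n t i c then some false
  else none

/-- The number of `-` (false) signs left uncanceled after scanning the word left-to-right,
iteratively canceling `-+` pairs. -/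
def mctr (w : List Bool) : ℕ := w.foldl (fun cnt b => if b then cnt - 1 else cnt + 1) 0

/-- The number of `+` (true) signs left uncanceled, scanning right-to-left. -/
def pctr (w : List Bool) : ℕ := w.foldr (fun b cnt => if b then cnt + 1 else cnt - 1) 0

/-- The word of column signs of the columns before column `c`. -/
def colWordBefore (n : ℕ) (t : Filling) (i c : ℕ) : List Bool :=
  (List.range c).filterMap (colSign n t i)

/-- The word of column signs of the columns after column `c` (among columns `< ncols`). -/
def colWordAfter (n ncols : ℕ) (t : Filling) (i c : ℕ) : List Bool :=
  ((List.range ncols).drop (c + 1)).filterMap (colSign n t i)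

/-- Column `c` carries an uncanceled `+` for the `i`-signature rule. -/
def PlusCol (n ncols : ℕ) (t : Filling) (i c : ℕ) : Prop :=
  c < ncols ∧ colSign n t i c = some true ∧ mctr (colWordBefore n t i c) = 0

/-- Column `c` carries an uncanceled `-` for the `i`-signature rule. -/
def MinusCol (n ncols : ℕ) (t : Filling) (i c : ℕ) : Prop :=
  c < ncols ∧ colSign n t i c = some false ∧ pctr (colWordAfter n ncols t i c) = 0

/-- Column `c` is the rightmost uncanceled `+`. -/
def fBoxCol (n ncols : ℕ) (t : Filling) (i c : ℕ) : Prop :=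
  PlusCol n ncols t i c ∧ ∀ c', PlusCol n ncols t i c' → c' ≤ c

/-- Column `c` is the leftmost uncanceled `-`. -/
def eBoxCol (n ncols : ℕ) (t : Filling) (i c : ℕ) : Prop :=
  MinusCol n ncols t i c ∧ ∀ c', MinusCol n ncols t i c' → c ≤ c'

/-- Replace the content of the box in row `r`, column `c` by `A`. -/
def updateBox (t : Filling) (r c : ℕ) (A : Finset ℕ) : Filling :=
  fun r' c' => if r' = r ∧ c' = c then A else t r' c'

/-- The set-valued crystal operator `f_i` (signature rule). -/
def fRaw (n : ℕ) (lam : ℕ → ℕ) (i : ℕ) (t : Filling) : Option Filling :=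
  if h : ∃ c, fBoxCol n (lam 0) t i c then
    let c := Classical.choose h
    if hr : ∃ r, r < n ∧ i ∈ t r c then
      let r := Classical.choose hr
      if i ∈ t r (c + 1) then
        some (updateBox (updateBox t r (c + 1) ((t r (c + 1)).erase i)) r c
          (insert (i + 1) (t r c)))
      else some (updateBox t r c (insert (i + 1) ((t r c).erase i)))
    else none
  else none

/-- The set-valued crystal operator `e_i` (signature rule). -/
def eRaw (n : ℕ) (lam : ℕ → ℕ) (i : ℕ) (t : Filling) : Option Filling :=
  if h : ∃ c, eBoxCol n (lam 0) t i c then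
    let c := Classical.choose h
    if hr : ∃ r, r < n ∧ (i + 1) ∈ t r c then
      let r := Classical.choose hr
      if 0 < c ∧ (i + 1) ∈ t r (c - 1) then
        some (updateBox (updateBox t r (c - 1) ((t r (c - 1)).erase (i + 1))) r c
          (insert i (t r c)))
      else some (updateBox t r c (insert i ((t r c).erase (i + 1))))
    else none
  else none

/-- Iterate a partially-defined operator. -/
def iterOpt (g : Filling → Option Filling) : ℕ → Filling → Option Filling
  | 0, t => some t
  | m + 1, t => (iterOpt g m t).bind g

/-- Highest weight (Yamanouchi) elements. -/
def IsYamanouchi (n : ℕ) (lam : ℕ → ℕ) (t : Filling) : Prop :=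
  ∀ i, 1 ≤ i → i < n → eRaw n lam i t = none

/-- Closure of `t0` under the crystal operators `e_i`, `f_i` for `1 ≤ i < n`. -/
inductive Reach (n : ℕ) (lam : ℕ → ℕ) (t0 : Filling) : Filling → Prop
  | base : Reach n lam t0 t0
  | stepF : ∀ {t t' : Filling} (i : ℕ), 1 ≤ i → i < n → Reach n lam t0 t →
      fRaw n lam i t = some t' → Reach n lam t0 t'
  | stepE : ∀ {t t' : Filling} (i : ℕ), 1 ≤ i → i < n → Reach n lam t0 t →
      eRaw n lam i t = some t' → Reach n lam t0 t'

/-- The one-row partition `(s)`. -/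
def rowShape (s : ℕ) : ℕ → ℕ := fun r => if r = 0 then s else 0

/-- The one-column partition `(1^k)`. -/
def colShape (k : ℕ) : ℕ → ℕ := fun r => if r < k then 1 else 0

/-- The hook partition `(s, 1^e)`. -/
def hookShape (s e : ℕ) : ℕ → ℕ := fun r => if r = 0 then s else if r ≤ e then 1 else 0

/-! ### K-theory crystal operators (for single rows and single columns) -/

/-- Some box of the tableau contains the entry `a`. -/
def containsEntry (n : ℕ) (lam : ℕ → ℕ) (t : Filling) (a : ℕ) : Prop :=
  ∃ r c, r < n ∧ c < lam r ∧ a ∈ t r c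

/-- `p` is the rightmost box of `t` containing `i`. -/
def KBoxF (n : ℕ) (lam : ℕ → ℕ) (t : Filling) (i : ℕ) (p : ℕ × ℕ) : Prop :=
  p.1 < n ∧ p.2 < lam p.1 ∧ i ∈ t p.1 p.2 ∧
    ∀ q : ℕ × ℕ, q.1 < n → q.2 < lam q.1 → i ∈ t q.1 q.2 → q.2 ≤ p.2

/-- The K-crystal operator `f_i^K`: if `i` occurs in `t` and `i+1` does not, add `i+1` to
the rightmost box containing `i`; otherwise `0`. -/
def fK (n : ℕ) (lam : ℕ → ℕ) (i : ℕ) (t : Filling) : Option Filling :=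
  if h : (∃ p : ℕ × ℕ, KBoxF n lam t i p) ∧ ¬ containsEntry n lam t (i + 1) then
    let p := Classical.choose h.1
    some (updateBox t p.1 p.2 (insert (i + 1) (t p.1 p.2)))
  else none

/-- The K-crystal operator `e_i^K`: delete `i+1` from the box containing both `i` and `i+1`,
if such a box exists; otherwise `0`. -/
def eK (n : ℕ) (lam : ℕ → ℕ) (i : ℕ) (t : Filling) : Option Filling :=
  if h : ∃ p : ℕ × ℕ, p.1 < n ∧ p.2 < lam p.1 ∧ i ∈ t p.1 p.2 ∧ (i + 1) ∈ t p.1 p.2 then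
    let p := Classical.choose h
    some (updateBox t p.1 p.2 ((t p.1 p.2).erase (i + 1)))
  else none

/-- `t'` is the result of applying `g` to `t` as many times as possible. -/
def MaxApply (g : Filling → Option Filling) (t t' : Filling) : Prop :=
  (∃ m, iterOpt g m t = some t') ∧ g t' = none

/-- One Demazure step: apply `e_i` as many times as possible, then `e_i^K` as many times
as possible (here `eKop i` is the `i`-th K-operator). -/
def DemStep (n : ℕ) (lam : ℕ → ℕ) (eKop : ℕ → Filling → Option Filling) (i : ℕ)
    (t t' : Filling) : Prop :=
  ∃ t1, MaxApply (eRaw n lam i) t t1 ∧ MaxApply (eKop i) t1 t'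

/-- `DemReach n lam eKop [i₁,…,iℓ] t u` holds when
`u = (e_{iℓ}^K)^max e_{iℓ}^max ⋯ (e_{i₁}^K)^max e_{i₁}^max t`. -/
def DemReach (n : ℕ) (lam : ℕ → ℕ) (eKop : ℕ → Filling → Option Filling) :
    List ℕ → Filling → Filling → Prop
  | [], t, u => t = u
  | i :: rest, t, u => ∃ t2, DemStep n lam eKop i t t2 ∧ DemReach n lam eKop rest t2 u

/-- The minimal highest weight tableau `u_λ`, whose row `r` boxes are all `{r+1}`. -/
def uTab (lam : ℕ → ℕ) : Filling := fun r c => if c < lam r then {r + 1} else ∅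

/-- The K-Demazure crystal associated with a word `[i₁,…,iℓ]`. -/
def KDem (n : ℕ) (lam : ℕ → ℕ) (eKop : ℕ → Filling → Option Filling) (word : List ℕ) :
    Set Filling :=
  {t | IsSVT n lam t ∧ DemReach n lam eKop word t (uTab lam)}

/-! ### Permutations and reduced words -/

/-- The permutation `s_{i₁} ⋯ s_{iℓ}` of a word `[i₁,…,iℓ]`, where `s_i` swaps `i`, `i+1`. -/
def wordPerm (word : List ℕ) : Equiv.Perm ℕ :=
  (word.map fun i => Equiv.swap i (i + 1)).prod

/-- `word` is a reduced word for `w` in the Coxeter generators `s_1, …, s_{n-1}`. -/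
def IsReducedWord (n : ℕ) (w : Equiv.Perm ℕ) (word : List ℕ) : Prop :=
  (∀ i ∈ word, 1 ≤ i ∧ i < n) ∧ wordPerm word = w ∧
    ∀ word' : List ℕ, (∀ i ∈ word', 1 ≤ i ∧ i < n) → wordPerm word' = w →
      word.length ≤ word'.length

/-- The Coxeter length of a permutation of `{1,…,n}`. -/
def permLength (n : ℕ) (σ : Equiv.Perm ℕ) : ℕ :=
  sInf {l | ∃ word : List ℕ, (∀ i ∈ word, 1 ≤ i ∧ i < n) ∧ wordPerm word = σ ∧
    word.length = l}

/-- The parabolic subgroup generated by `s_2, …, s_{n-1}`. -/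
def parabolic (n : ℕ) : Subgroup (Equiv.Perm ℕ) :=
  Subgroup.closure {σ | ∃ i, 2 ≤ i ∧ i < n ∧ σ = Equiv.swap i (i + 1)}

/-! ### Polynomials -/

/-- Polynomials in `x₁, x₂, …` over `ℤ[β]`; the variable `β` is `Polynomial.X`. -/
abbrev KPoly : Type := MvPolynomial ℕ (Polynomial ℤ)

/-- The scalar `β`. -/
def betaP : KPoly := MvPolynomial.C Polynomial.X

/-- The monomial `x^{wt(T)} = x₁^{wt₁} ⋯ xₙ^{wtₙ}`. -/
def xwt (n : ℕ) (lam : ℕ → ℕ) (t : Filling) : KPoly :=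
  ∏ j ∈ Finset.Icc 1 n, (MvPolynomial.X j : KPoly) ^ wt n lam t j

/-- The β-character `∑_{T ∈ S} β^{excess T} x^{wt T}` of a set of tableaux. -/
def charSet (n : ℕ) (lam : ℕ → ℕ) (S : Set Filling) : KPoly :=
  ∑ᶠ t ∈ S, betaP ^ excess n lam t * xwt n lam t

/-- The symmetric Grothendieck polynomial `𝔊_λ(x₁,…,xₙ; β)`. -/
def Groth (n : ℕ) (lam : ℕ → ℕ) : KPoly :=
  charSet n lam {t | IsSVT n lam t}

/-- The Schur polynomial `s_μ(x₁,…,xₙ)`. -/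
def SchurP (n : ℕ) (mu : ℕ → ℕ) : KPoly :=
  ∑ᶠ t ∈ {t : Filling | IsSSYT n mu t}, xwt n mu t

/-- The numerator defining the Demazure–Lascoux operator `ϖ_i`. -/
def DLnum (i : ℕ) (f : KPoly) : KPoly :=
  (MvPolynomial.X i + betaP * MvPolynomial.X i * MvPolynomial.X (i + 1)) * f -
    (MvPolynomial.X (i + 1) + betaP * MvPolynomial.X i * MvPolynomial.X (i + 1)) *
      (MvPolynomial.rename (Equiv.swap i (i + 1)) f)

/-- `DL` implements the Demazure–Lascoux operators `ϖ_i` for `1 ≤ i < n`: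
`(x_i - x_{i+1}) · ϖ_i f` equals the defining numerator. -/
def IsDLOp (n : ℕ) (DL : ℕ → KPoly → KPoly) : Prop :=
  ∀ i, 1 ≤ i → i < n → ∀ f : KPoly,
    (MvPolynomial.X i - MvPolynomial.X (i + 1)) * DL i f = DLnum i f

/-- `applyDL DL [i₁,…,iℓ] f = ϖ_{i₁} ϖ_{i₂} ⋯ ϖ_{iℓ} f`. -/
def applyDL (DL : ℕ → KPoly → KPoly) : List ℕ → KPoly → KPoly
  | [], f => f
  | i :: rest, f => DL i (applyDL DL rest f)

open Finset

section ColumnTableau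

variable {n k : ℕ} {t : Filling} {r r' r₀ a b c i : ℕ}

theorem lt_colShape_iff : c < colShape k r ↔ r < k ∧ c = 0 := by
  unfold colShape
  split_ifs <;> omega

theorem IsSVT.mem_colShape (ht : IsSVT n (colShape k) t) (ha : a ∈ t r c) : r < k ∧ c = 0 := by
  by_contra h
  rw [ht.emptyOutside r c (by rwa [lt_colShape_iff])] at ha
  exact notMem_empty a ha

theorem IsSVT.nonempty_colShape (ht : IsSVT n (colShape k) t) (hr : r < k) : (t r 0).Nonempty :=
  ht.boxNonempty r 0 (lt_colShape_iff.2 ⟨hr, rfl⟩)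

theorem IsSVT.lt_of_row_lt (ht : IsSVT n (colShape k) t) (hrr : r < r') (ha : a ∈ t r 0)
    (hb : b ∈ t r' 0) : a < b := by
  induction r' generalizing b with
  | zero => omega
  | succ r' ih =>
    obtain ⟨c, hc⟩ := ht.nonempty_colShape (Nat.lt_of_succ_lt (ht.mem_colShape hb).1)
    rcases Nat.lt_succ_iff_lt_or_eq.1 hrr with h | rfl
    · exact (ih h hc).trans (ht.colStrict r' 0 c b hc hb)
    · exact ht.colStrict r 0 a b ha hb

theorem IsSVT.row_eq_of_mem (ht : IsSVT n (colShape k) t) (ha : a ∈ t r 0) (ha' : a ∈ t r' 0) :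
    r = r' := by
  by_contra h
  rcases Nat.lt_or_gt_of_ne h with h | h
  · exact lt_irrefl a (ht.lt_of_row_lt h ha ha')
  · exact lt_irrefl a (ht.lt_of_row_lt h ha' ha)

theorem IsSVT.row_lt_entry (ht : IsSVT n (colShape k) t) (ha : a ∈ t r 0) : r < a := by
  induction r generalizing a with
  | zero => exact (ht.entryBounds 0 0 a ha).1
  | succ r ih =>
    obtain ⟨b, hb⟩ := ht.nonempty_colShape (Nat.lt_of_succ_lt (ht.mem_colShape ha).1)
    have := ht.colStrict r 0 b a hb ha
    have := ih hb
    omega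

theorem IsSVT.row_lt_bound (ht : IsSVT n (colShape k) t) (ha : a ∈ t r 0) : r < n :=
  (ht.row_lt_entry ha).trans_le (ht.entryBounds r 0 a ha).2

theorem IsSVT.colHas_zero_iff (ht : IsSVT n (colShape k) t) :
    colHas n t a 0 ↔ ∃ r, a ∈ t r 0 :=
  ⟨fun ⟨r, _, h⟩ => ⟨r, h⟩, fun ⟨r, h⟩ => ⟨r, ht.row_lt_bound h, h⟩⟩

theorem IsSVT.updateBox_colShape (ht : IsSVT n (colShape k) t) (hr₀ : r₀ < k) {B : Finset ℕ}
    (hne : B.Nonempty) (hbd : ∀ x ∈ B, 1 ≤ x ∧ x ≤ n)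
    (habove : ∀ r, r + 1 = r₀ → ∀ y ∈ t r 0, ∀ x ∈ B, y < x)
    (hbelow : ∀ x ∈ B, ∀ y ∈ t (r₀ + 1) 0, x < y) :
    IsSVT n (colShape k) (updateBox t r₀ 0 B) := by
  refine ⟨fun r c hc => ?_, fun r c hc => ?_, fun r c x hx => ?_, fun r c x y _ hy => ?_,
    fun r c x y hx hy => ?_⟩
  · unfold updateBox
    split_ifs
    exacts [hne, ht.boxNonempty r c hc]
  · have : ¬ (r = r₀ ∧ c = 0) := fun h => hc (lt_colShape_iff.2 ⟨h.1 ▸ hr₀, h.2⟩)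
    simp only [updateBox, if_neg this]
    exact ht.emptyOutside r c hc
  · unfold updateBox at hx
    split_ifs at hx
    exacts [hbd x hx, ht.entryBounds r c x hx]
  · simp only [updateBox, show ¬ (r = r₀ ∧ c + 1 = 0) by omega, if_false] at hy
    exact absurd (ht.mem_colShape hy).2 (by omega)
  · unfold updateBox at hx hy
    split_ifs at hx hy with h₁ h₂ h₂
    · omega
    · rw [h₁.2, h₁.1] at hy
      exact hbelow x hx y hy
    · rw [h₂.2] at hx
      exact habove r h₂.1 x hx y hy
    · exact ht.colStrict r c x y hx hy

end ColumnTableau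

section LowerEntry

variable {n k : ℕ} {t : Filling} {r r₀ a i : ℕ}

def lowerEntry (t : Filling) (r i : ℕ) : Filling :=
  updateBox t r 0 (insert i ((t r 0).erase (i + 1)))

theorem self_mem_lowerEntry : i ∈ lowerEntry t r₀ i r₀ 0 := by
  simp [lowerEntry, updateBox]

theorem mem_lowerEntry_of_mem (ha : a ∈ t r 0) (hne : a ≠ i + 1) : a ∈ lowerEntry t r₀ i r 0 := by
  unfold lowerEntry updateBox
  split_ifs with h
  · rw [← h.1]
    exact mem_insert_of_mem (mem_erase.2 ⟨hne, ha⟩)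
  · exact ha

theorem mem_of_mem_lowerEntry (ha : a ∈ lowerEntry t r₀ i r 0) :
    a ∈ t r 0 ∨ (r = r₀ ∧ a = i) := by
  unfold lowerEntry updateBox at ha
  split_ifs at ha with h
  · rcases mem_insert.1 ha with rfl | ha
    · exact .inr ⟨h.1, rfl⟩
    · exact .inl (h.1 ▸ mem_of_mem_erase ha)
  · exact .inl ha

theorem succ_notMem_lowerEntry (ht : IsSVT n (colShape k) t) (hmem : i + 1 ∈ t r₀ 0) :
    i + 1 ∉ lowerEntry t r₀ i r 0 := by
  unfold lowerEntry updateBox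
  split_ifs with h
  · simp
  · exact fun hr => h ⟨ht.row_eq_of_mem hr hmem, rfl⟩

theorem IsSVT.lowerEntry (ht : IsSVT n (colShape k) t) (hi : 1 ≤ i) (hmem : i + 1 ∈ t r₀ 0)
    (hi₀ : i ∈ t r₀ 0 ∨ ∀ r, i ∉ t r 0) : IsSVT n (colShape k) (lowerEntry t r₀ i) := by
  have hi₀' : ∀ r, i ∈ t r 0 → r = r₀ := fun r h => by
    rcases hi₀ with h₀ | h₀
    exacts [ht.row_eq_of_mem h h₀, absurd h (h₀ r)]
  refine ht.updateBox_colShape (ht.mem_colShape hmem).1 (insert_nonempty _ _) ?_ ?_ ?_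
  · intro x hx
    rcases mem_insert.1 hx with rfl | hx
    · exact ⟨hi, by have := (ht.entryBounds r₀ 0 _ hmem).2; omega⟩
    · exact ht.entryBounds r₀ 0 x (mem_of_mem_erase hx)
  · intro r hr y hy x hx
    rcases mem_insert.1 hx with rfl | hx
    · have := ht.colStrict r 0 y _ hy (hr ▸ hmem)
      have : y ≠ x := fun h => by have := hi₀' r (h ▸ hy); omega
      omega
    · exact ht.colStrict r 0 y x hy (hr ▸ mem_of_mem_erase hx)
  · intro x hx y hy
    rcases mem_insert.1 hx with rfl | hx
    · have := ht.colStrict r₀ 0 _ y hmem hy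
      omega
    · exact ht.colStrict r₀ 0 x y (mem_of_mem_erase hx) hy

end LowerEntry

section Operators

variable {n k : ℕ} {t : Filling} {r₀ i c : ℕ}

theorem colSign_eq_some_false_iff :
    colSign n t i c = some false ↔ colHas n t (i + 1) c ∧ ¬ colHas n t i c := by
  unfold colSign
  split_ifs <;> simp_all

theorem eBoxCol_colShape_iff :
    eBoxCol n (colShape k 0) t i c ↔
      c = 0 ∧ 0 < k ∧ colHas n t (i + 1) 0 ∧ ¬ colHas n t i 0 := by
  have hword : colWordAfter n (colShape k 0) t i c = [] := by
    have : colShape k 0 ≤ c + 1 := by unfold colShape; split_ifs <;> omega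
    simp [colWordAfter, List.drop_eq_nil_of_le, this]
  constructor
  · rintro ⟨⟨hc, hsign, -⟩, -⟩
    obtain ⟨hk, rfl⟩ := lt_colShape_iff.1 hc
    exact ⟨rfl, hk, colSign_eq_some_false_iff.1 hsign⟩
  · rintro ⟨rfl, hk, hsign⟩
    exact ⟨⟨lt_colShape_iff.2 ⟨hk, rfl⟩, colSign_eq_some_false_iff.2 hsign, by rw [hword]; rfl⟩,
      fun _ _ => Nat.zero_le _⟩

theorem eRaw_colShape_eq_none (h : ¬ (colHas n t (i + 1) 0 ∧ ¬ colHas n t i 0)) :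
    eRaw n (colShape k) i t = none := by
  rw [eRaw, dif_neg]
  rintro ⟨c, hc⟩
  exact h (eBoxCol_colShape_iff.1 hc).2.2

theorem eRaw_colShape_eq_some (ht : IsSVT n (colShape k) t) (hmem : i + 1 ∈ t r₀ 0)
    (hi : ∀ r, i ∉ t r 0) : eRaw n (colShape k) i t = some (lowerEntry t r₀ i) := by
  have hcol : ∃ c, eBoxCol n (colShape k 0) t i c :=
    ⟨0, eBoxCol_colShape_iff.2 ⟨rfl, Nat.zero_lt_of_lt (ht.mem_colShape hmem).1,
      ht.colHas_zero_iff.2 ⟨r₀, hmem⟩, fun h => (ht.colHas_zero_iff.1 h).elim hi⟩⟩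
  have hc : Classical.choose hcol = 0 := (eBoxCol_colShape_iff.1 (Classical.choose_spec hcol)).1
  have hrow : ∃ r, r < n ∧ i + 1 ∈ t r 0 := ⟨r₀, ht.row_lt_bound hmem, hmem⟩
  have hr : Classical.choose hrow = r₀ := ht.row_eq_of_mem (Classical.choose_spec hrow).2 hmem
  rw [eRaw, dif_pos hcol]
  simp only [hc]
  rw [dif_pos hrow, hr, if_neg (fun h => lt_irrefl 0 h.1), lowerEntry]

theorem eK_colShape_eq_none (h : ∀ r, i ∈ t r 0 → i + 1 ∉ t r 0) :
    eK n (colShape k) i t = none := by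
  rw [eK, dif_neg]
  rintro ⟨⟨r, c⟩, -, hc, hi, hi₁⟩
  obtain ⟨-, rfl⟩ := lt_colShape_iff.1 hc
  exact h r hi hi₁

theorem eK_colShape_eq_some (ht : IsSVT n (colShape k) t) (hi : i ∈ t r₀ 0)
    (hi₁ : i + 1 ∈ t r₀ 0) : eK n (colShape k) i t = some (lowerEntry t r₀ i) := by
  have hbox : ∃ p : ℕ × ℕ, p.1 < n ∧ p.2 < colShape k p.1 ∧ i ∈ t p.1 p.2 ∧ i + 1 ∈ t p.1 p.2 :=
    ⟨(r₀, 0), ht.row_lt_bound hi, lt_colShape_iff.2 ⟨(ht.mem_colShape hi).1, rfl⟩, hi, hi₁⟩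
  obtain ⟨-, hc, -, hp⟩ := Classical.choose_spec hbox
  have hp₀ : Classical.choose hbox = (r₀, 0) := by
    obtain ⟨-, h₂⟩ := lt_colShape_iff.1 hc
    rw [h₂] at hp
    exact Prod.ext (ht.row_eq_of_mem hp hi₁) h₂
  rw [eK, dif_pos hbox, hp₀, lowerEntry, insert_eq_of_mem (mem_erase.2 ⟨by omega, hi⟩)]

end Operators

section MaxApply

variable {g : Filling → Option Filling} {t s t' : Filling}

theorem iterOpt_succ' (m : ℕ) (t : Filling) : iterOpt g (m + 1) t = (g t).bind (iterOpt g m) := by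
  induction m generalizing t with
  | zero => simp [iterOpt]
  | succ m ih => rw [iterOpt, ih, Option.bind_assoc]; rfl

theorem maxApply_of_eq_none (h : g t = none) : MaxApply g t t' ↔ t' = t := by
  refine ⟨fun ⟨⟨m, hm⟩, _⟩ => ?_, fun h' => ⟨⟨0, h' ▸ rfl⟩, h' ▸ h⟩⟩
  cases m with
  | zero => exact (Option.some_injective _ hm).symm
  | succ m => simp [iterOpt_succ', h] at hm

theorem maxApply_of_eq_some (h : g t = some s) : MaxApply g t t' ↔ MaxApply g s t' := by
  refine ⟨fun ⟨⟨m, hm⟩, hnone⟩ => ⟨⟨m - 1, ?_⟩, hnone⟩,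
    fun ⟨⟨m, hm⟩, hnone⟩ => ⟨⟨m + 1, ?_⟩, hnone⟩⟩
  · cases m with
    | zero =>
      obtain rfl : t = t' := Option.some_injective _ hm
      simp [h] at hnone
    | succ m => simpa [iterOpt_succ', h] using hm
  · rwa [iterOpt_succ', h, Option.bind_some]

end MaxApply

section ColumnStep

variable {n k : ℕ} {t t' : Filling} {r₀ i : ℕ}

theorem demStep_colShape_iff_eq_lowerEntry (ht : IsSVT n (colShape k) t) (hmem : i + 1 ∈ t r₀ 0)
    (hi₀ : i ∈ t r₀ 0 ∨ ∀ r, i ∉ t r 0) :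
    DemStep n (colShape k) (eK n (colShape k)) i t t' ↔ t' = lowerEntry t r₀ i := by
  have hK : eK n (colShape k) i (lowerEntry t r₀ i) = none :=
    eK_colShape_eq_none fun r _ => succ_notMem_lowerEntry ht hmem
  rcases hi₀ with hi | hi
  · have hE : eRaw n (colShape k) i t = none :=
      eRaw_colShape_eq_none fun h => h.2 ⟨r₀, ht.row_lt_bound hi, hi⟩
    simp only [DemStep, maxApply_of_eq_none hE, exists_eq_left,
      maxApply_of_eq_some (eK_colShape_eq_some ht hi hmem), maxApply_of_eq_none hK]
  · have hE : eRaw n (colShape k) i (lowerEntry t r₀ i) = none :=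
      eRaw_colShape_eq_none fun h => h.2 ⟨r₀, ht.row_lt_bound hmem, self_mem_lowerEntry⟩
    simp only [DemStep, maxApply_of_eq_some (eRaw_colShape_eq_some ht hmem hi),
      maxApply_of_eq_none hE, exists_eq_left, maxApply_of_eq_none hK]

theorem demStep_colShape_iff_eq_self (ht : IsSVT n (colShape k) t)
    (h : ∀ r, i + 1 ∈ t r 0 → ∃ r' < r, i ∈ t r' 0) :
    DemStep n (colShape k) (eK n (colShape k)) i t t' ↔ t' = t := by
  have hE : eRaw n (colShape k) i t = none := eRaw_colShape_eq_none fun ⟨⟨r, _, hr⟩, hi⟩ =>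
    let ⟨r', _, hr'⟩ := h r hr
    hi ⟨r', ht.row_lt_bound hr', hr'⟩
  have hK : eK n (colShape k) i t = none := by
    refine eK_colShape_eq_none fun r hi hi₁ => ?_
    obtain ⟨r', hr', hi'⟩ := h r hi₁
    exact hr'.ne (ht.row_eq_of_mem hi' hi)
  simp only [DemStep, maxApply_of_eq_none hE, exists_eq_left, maxApply_of_eq_none hK]

end ColumnStep

section BelowKey

variable {n k : ℕ} {A : Finset ℕ} {t : Filling} {r₀ i a b : ℕ}

/-- For `A = {a₁ < ⋯ < a_k}` this says that every entry in row `r` (counted from `0`) is at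
most `a_{r+1}`. -/
def BelowKey (A : Finset ℕ) (t : Filling) : Prop :=
  ∀ r a, a ∈ t r 0 → #{x ∈ A | x < a} ≤ r

theorem card_filter_lt_mono (A : Finset ℕ) (hab : a ≤ b) : #{x ∈ A | x < a} ≤ #{x ∈ A | x < b} :=
  card_le_card (monotone_filter_right A fun _ _ h => h.trans_le hab)

theorem card_filter_lt_or_eq (A : Finset ℕ) (hab : a ≤ b) :
    #{x ∈ A | x < a ∨ x = b} = #{x ∈ A | x < a} + if b ∈ A then 1 else 0 := by
  rw [filter_or, card_union_of_disjoint (disjoint_filter.2 fun _ _ h h' => by omega), filter_eq']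
  split_ifs <;> simp

theorem card_filter_lt_succ (A : Finset ℕ) (a : ℕ) :
    #{x ∈ A | x < a + 1} = #{x ∈ A | x < a} + if a ∈ A then 1 else 0 := by
  rw [← card_filter_lt_or_eq A le_rfl]
  exact congrArg card (filter_congr fun x _ => Nat.lt_succ_iff_lt_or_eq)

theorem card_filter_image_swap (A : Finset ℕ) (i a : ℕ) :
    #{x ∈ A.image (Equiv.swap i (i + 1)) | x < a} = #{x ∈ A | Equiv.swap i (i + 1) x < a} := by
  rw [filter_image, card_image_of_injective _ (Equiv.injective _)]

theorem card_filter_lt_image_swap_of_ne (ha : a ≠ i + 1) :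
    #{x ∈ A.image (Equiv.swap i (i + 1)) | x < a} = #{x ∈ A | x < a} := by
  rw [card_filter_image_swap]
  refine congrArg card (filter_congr fun x _ => ?_)
  rw [Equiv.swap_apply_def]
  split_ifs <;> omega

theorem card_filter_lt_image_swap_succ :
    #{x ∈ A.image (Equiv.swap i (i + 1)) | x < i + 1} =
      #{x ∈ A | x < i} + if i + 1 ∈ A then 1 else 0 := by
  rw [card_filter_image_swap, ← card_filter_lt_or_eq A (Nat.le_succ i)]
  refine congrArg card (filter_congr fun x _ => ?_)
  rw [Equiv.swap_apply_def]
  split_ifs <;> omega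

theorem card_filter_lt_le_image_swap (hH : i ∈ A → i + 1 ∈ A) (a : ℕ) :
    #{x ∈ A | x < a} ≤ #{x ∈ A.image (Equiv.swap i (i + 1)) | x < a} := by
  by_cases ha : a = i + 1
  · rw [ha, card_filter_lt_image_swap_succ, card_filter_lt_succ]
    by_cases hi : i ∈ A
    · simp [hi, hH hi]
    · simp [hi]
  · rw [card_filter_lt_image_swap_of_ne ha]

theorem BelowKey.of_image_swap (hH : i ∈ A → i + 1 ∈ A)
    (h : BelowKey (A.image (Equiv.swap i (i + 1))) t) : BelowKey A t :=
  fun r a ha => (card_filter_lt_le_image_swap hH a).trans (h r a ha)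

theorem BelowKey.image_swap (h : BelowKey A t) (hlow : ∀ r, i + 1 ∈ t r 0 → ∃ r' < r, i ∈ t r' 0) :
    BelowKey (A.image (Equiv.swap i (i + 1))) t := by
  intro r a ha
  by_cases hai : a = i + 1
  · subst hai
    obtain ⟨r', hr', hi⟩ := hlow r ha
    have := h r' i hi
    rw [card_filter_lt_image_swap_succ]
    split_ifs <;> omega
  · rw [card_filter_lt_image_swap_of_ne hai]
    exact h r a ha

theorem BelowKey.image_swap_lowerEntry (ht : IsSVT n (colShape k) t) (hmem : i + 1 ∈ t r₀ 0)
    (h : BelowKey A t) : BelowKey (A.image (Equiv.swap i (i + 1))) (lowerEntry t r₀ i) := by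
  intro r a ha
  rw [card_filter_lt_image_swap_of_ne (ne_of_mem_of_not_mem ha (succ_notMem_lowerEntry ht hmem))]
  rcases mem_of_mem_lowerEntry ha with ha | ⟨rfl, rfl⟩
  · exact h r a ha
  · exact (card_filter_lt_mono A a.le_succ).trans (h r (a + 1) hmem)

theorem BelowKey.of_image_swap_lowerEntry (ht : IsSVT n (colShape k) t)
    (hH : i ∈ A → i + 1 ∈ A) (hA : #A = k) (hmem : i + 1 ∈ t r₀ 0)
    (h : BelowKey (A.image (Equiv.swap i (i + 1))) (lowerEntry t r₀ i)) : BelowKey A t := by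
  intro r a ha
  by_cases hai : a = i + 1
  swap
  · rw [← card_filter_lt_image_swap_of_ne hai]
    exact h r a (mem_lowerEntry_of_mem ha hai)
  subst hai
  obtain rfl := ht.row_eq_of_mem ha hmem
  have hi := h r i self_mem_lowerEntry
  rw [card_filter_lt_image_swap_of_ne (by omega)] at hi
  rw [card_filter_lt_succ]
  by_cases hiA : i ∈ A
  swap
  · simpa [hiA] using hi
  -- Otherwise `i` would be the `(r+1)`-th element of `A` and `i + 1` the next one, which is
  -- too small for the entries of row `r + 1`.
  rw [if_pos hiA]
  by_contra hlt
  have h₁ := card_filter_lt_succ A i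
  have h₂ := card_filter_lt_succ A (i + 1)
  rw [if_pos hiA] at h₁
  rw [if_pos (hH hiA)] at h₂
  have hk : #{x ∈ A | x < i + 1 + 1} ≤ k := hA ▸ card_filter_le _ _
  obtain ⟨z, hz⟩ := ht.nonempty_colShape (show r + 1 < k by omega)
  have hzi := ht.colStrict r 0 _ z ha hz
  have hz' := h (r + 1) z (mem_lowerEntry_of_mem hz (by omega))
  rw [card_filter_lt_image_swap_of_ne (by omega)] at hz'
  have := card_filter_lt_mono A (show i + 1 + 1 ≤ z by omega)
  omega

theorem exists_demStep_colShape (ht : IsSVT n (colShape k) t) (hi : 1 ≤ i)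
    (hH : i ∈ A → i + 1 ∈ A) (hA : #A = k) :
    ∃ D, IsSVT n (colShape k) D ∧
      (∀ t', DemStep n (colShape k) (eK n (colShape k)) i t t' ↔ t' = D) ∧
      (BelowKey (A.image (Equiv.swap i (i + 1))) D ↔ BelowKey A t) := by
  by_cases hlow : ∃ r₀, i + 1 ∈ t r₀ 0 ∧ (i ∈ t r₀ 0 ∨ ∀ r, i ∉ t r 0)
  · obtain ⟨r₀, hmem, hi₀⟩ := hlow
    exact ⟨lowerEntry t r₀ i, ht.lowerEntry hi hmem hi₀,
      fun _ => demStep_colShape_iff_eq_lowerEntry ht hmem hi₀,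
      BelowKey.of_image_swap_lowerEntry ht hH hA hmem, BelowKey.image_swap_lowerEntry ht hmem⟩
  · have hself : ∀ r, i + 1 ∈ t r 0 → ∃ r' < r, i ∈ t r' 0 := by
      intro r hr
      push Not at hlow
      obtain ⟨hir, r', hr'⟩ := hlow r hr
      rcases lt_trichotomy r' r with h | rfl | h
      · exact ⟨r', h, hr'⟩
      · exact absurd hr' hir
      · exact absurd (ht.lt_of_row_lt h hr hr') (by omega)
    exact ⟨t, ht, fun _ => demStep_colShape_iff_eq_self ht hself,
      BelowKey.of_image_swap hH, fun h => h.image_swap hself⟩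

end BelowKey

section Permutations

variable {n i k : ℕ} {u w : Equiv.Perm ℕ} {word rest : List ℕ}

def symmIcc (n : ℕ) : Subgroup (Equiv.Perm ℕ) := fixingSubgroup (Equiv.Perm ℕ) (Set.Icc 1 n)ᶜ

theorem mem_symmIcc : u ∈ symmIcc n ↔ ∀ x, ¬ (1 ≤ x ∧ x ≤ n) → u x = x := by
  simp [symmIcc, mem_fixingSubgroup_iff, Equiv.Perm.smul_def]

theorem swap_mem_symmIcc (h₁ : 1 ≤ i) (h₂ : i < n) : Equiv.swap i (i + 1) ∈ symmIcc n :=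
  mem_symmIcc.2 fun _ hx => Equiv.swap_apply_of_ne_of_ne (by omega) (by omega)

theorem wordPerm_mem_symmIcc (h : ∀ i ∈ word, 1 ≤ i ∧ i < n) : wordPerm word ∈ symmIcc n :=
  Subgroup.list_prod_mem _ (by simpa using fun i hi => swap_mem_symmIcc (h i hi).1 (h i hi).2)

theorem apply_mem_Icc_iff (hu : u ∈ symmIcc n) {x : ℕ} : (1 ≤ u x ∧ u x ≤ n) ↔ (1 ≤ x ∧ x ≤ n) := by
  refine ⟨fun h => ?_, fun h => ?_⟩ <;> by_contra hx
  · rw [mem_symmIcc.1 hu x hx] at h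
    exact hx h
  · have := u.injective (mem_symmIcc.1 hu _ hx)
    rw [this] at hx
    exact hx h

def inversions (n : ℕ) (u : Equiv.Perm ℕ) : Finset (ℕ × ℕ) :=
  {p ∈ Icc 1 n ×ˢ Icc 1 n | p.1 < p.2 ∧ u p.2 < u p.1}

theorem inversions_swap_mul (hu : u ∈ symmIcc n) (h₁ : 1 ≤ i) (h₂ : i < n)
    (hlt : u⁻¹ i < u⁻¹ (i + 1)) :
    inversions n (Equiv.swap i (i + 1) * u) = insert (u⁻¹ i, u⁻¹ (i + 1)) (inversions n u) := by
  have hp := (apply_mem_Icc_iff hu (x := u⁻¹ i)).1 (by simp; omega)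
  have hq := (apply_mem_Icc_iff hu (x := u⁻¹ (i + 1))).1 (by simp; omega)
  ext ⟨a, b⟩
  obtain ⟨x, rfl⟩ := u⁻¹.surjective a
  obtain ⟨y, rfl⟩ := u⁻¹.surjective b
  rw [inversions, inversions, mem_insert, mem_filter, mem_filter]
  simp only [mem_product, mem_Icc, Prod.mk.injEq, Equiv.Perm.mul_apply, Equiv.Perm.coe_inv,
    Equiv.apply_symm_apply, EmbeddingLike.apply_eq_iff_eq, Equiv.swap_apply_def] at hlt hp hq ⊢
  split_ifs <;> subst_vars <;> omega

theorem card_inversions_swap_mul_of_lt (hu : u ∈ symmIcc n) (h₁ : 1 ≤ i) (h₂ : i < n)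
    (hlt : u⁻¹ i < u⁻¹ (i + 1)) :
    #(inversions n (Equiv.swap i (i + 1) * u)) = #(inversions n u) + 1 := by
  rw [inversions_swap_mul hu h₁ h₂ hlt, card_insert_of_notMem]
  simp [inversions]

theorem card_inversions_swap_mul_of_gt (hu : u ∈ symmIcc n) (h₁ : 1 ≤ i) (h₂ : i < n)
    (hgt : u⁻¹ (i + 1) < u⁻¹ i) :
    #(inversions n (Equiv.swap i (i + 1) * u)) + 1 = #(inversions n u) := by
  have h := card_inversions_swap_mul_of_lt (mul_mem (swap_mem_symmIcc h₁ h₂) hu) h₁ h₂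
    (by simpa [Equiv.Perm.mul_apply] using hgt)
  rwa [← mul_assoc, Equiv.swap_mul_self, one_mul, eq_comm] at h

theorem card_inversions_swap_mul_le (hu : u ∈ symmIcc n) (h₁ : 1 ≤ i) (h₂ : i < n) :
    #(inversions n (Equiv.swap i (i + 1) * u)) ≤ #(inversions n u) + 1 := by
  rcases lt_or_gt_of_ne (u⁻¹.injective.ne (by omega : i ≠ i + 1)) with h | h
  · exact (card_inversions_swap_mul_of_lt hu h₁ h₂ h).le
  · have := card_inversions_swap_mul_of_gt hu h₁ h₂ h
    omega

theorem inversions_one : inversions n 1 = ∅ := by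
  rw [inversions, filter_eq_empty_iff]
  exact fun _ _ h => lt_asymm h.1 h.2

theorem wordPerm_cons (i : ℕ) (rest : List ℕ) :
    wordPerm (i :: rest) = Equiv.swap i (i + 1) * wordPerm rest := by
  simp [wordPerm]

theorem card_inversions_wordPerm_le (h : ∀ i ∈ word, 1 ≤ i ∧ i < n) :
    #(inversions n (wordPerm word)) ≤ word.length := by
  induction word with
  | nil => simp [wordPerm, inversions_one]
  | cons i rest ih =>
    have hi := h i List.mem_cons_self
    have hrest : ∀ j ∈ rest, 1 ≤ j ∧ j < n := fun j hj => h j (List.mem_cons_of_mem i hj)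
    have := card_inversions_swap_mul_le (wordPerm_mem_symmIcc hrest) hi.1 hi.2
    have := ih hrest
    rw [wordPerm_cons, List.length_cons]
    omega

theorem exists_apply_succ_lt_apply (hu : u ∈ symmIcc n) (h : u ≠ 1) :
    ∃ j, 1 ≤ j ∧ j < n ∧ u (j + 1) < u j := by
  by_contra! hmono
  refine h (Equiv.ext fun x => ?_)
  have hu' : StrictMono u := strictMono_nat_of_lt_succ fun j => by
    have := hmono j
    have := u.injective.ne (show j ≠ j + 1 by omega)
    have := apply_mem_Icc_iff hu (x := j)
    have := apply_mem_Icc_iff hu (x := j + 1)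
    have := mem_symmIcc.1 hu j
    have := mem_symmIcc.1 hu (j + 1)
    omega
  -- the only order automorphism of `ℕ` is the identity
  simpa using DFunLike.congr_fun
    (Subsingleton.elim (hu'.orderIsoOfSurjective u u.surjective) (OrderIso.refl ℕ)) x

theorem inversions_eq_empty_iff (hu : u ∈ symmIcc n) : inversions n u = ∅ ↔ u = 1 := by
  refine ⟨fun h => by_contra fun h₁ => ?_, fun h => h ▸ inversions_one⟩
  obtain ⟨j, hj₁, hj₂, hj⟩ := exists_apply_succ_lt_apply hu h₁
  have : (j, j + 1) ∈ inversions n u := by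
    simp only [inversions, mem_filter, mem_product, mem_Icc]
    omega
  simp [h] at this

theorem exists_word_length_eq_card_inversions (hu : u ∈ symmIcc n) :
    ∃ word : List ℕ, (∀ i ∈ word, 1 ≤ i ∧ i < n) ∧ wordPerm word = u ∧
      word.length = #(inversions n u) := by
  induction hm : #(inversions n u) generalizing u with
  | zero =>
    rw [card_eq_zero, inversions_eq_empty_iff hu] at hm
    exact ⟨[], by simp, hm.symm, rfl⟩
  | succ m ih =>
    have hu₁ : u⁻¹ ≠ 1 := fun h => by
      rw [inv_eq_one, ← inversions_eq_empty_iff hu] at h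
      simp [h] at hm
    obtain ⟨j, hj₁, hj₂, hj⟩ := exists_apply_succ_lt_apply (inv_mem hu) hu₁
    obtain ⟨word, hw, hperm, hlen⟩ := ih (mul_mem (swap_mem_symmIcc hj₁ hj₂) hu)
      (by have := card_inversions_swap_mul_of_gt hu hj₁ hj₂ hj; omega)
    refine ⟨j :: word, fun i hi => ?_, ?_, by simp [hlen]⟩
    · rcases List.mem_cons.1 hi with rfl | hi
      exacts [⟨hj₁, hj₂⟩, hw i hi]
    · rw [wordPerm_cons, hperm, ← mul_assoc, Equiv.swap_mul_self, one_mul]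

theorem IsReducedWord.mem_symmIcc (h : IsReducedWord n w word) : w ∈ symmIcc n :=
  h.2.1 ▸ wordPerm_mem_symmIcc h.1

theorem IsReducedWord.length_eq (h : IsReducedWord n w word) :
    word.length = #(inversions n w) := by
  obtain ⟨hw, rfl, hmin⟩ := h
  obtain ⟨word', hw', hperm, hlen⟩ :=
    exists_word_length_eq_card_inversions (wordPerm_mem_symmIcc hw)
  exact le_antisymm (hlen ▸ hmin word' hw' hperm) (card_inversions_wordPerm_le hw)

theorem IsReducedWord.tail (h : IsReducedWord n w (i :: rest)) :
    IsReducedWord n (Equiv.swap i (i + 1) * w) rest := by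
  obtain ⟨hw, rfl, hmin⟩ := h
  refine ⟨fun j hj => hw j (List.mem_cons_of_mem i hj), ?_, fun word' hw' hperm => ?_⟩
  · rw [wordPerm_cons, ← mul_assoc, Equiv.swap_mul_self, one_mul]
  · have := hmin (i :: word') (fun j hj => ?_) ?_
    · simpa using this
    · rcases List.mem_cons.1 hj with rfl | hj
      exacts [hw j List.mem_cons_self, hw' j hj]
    · rw [wordPerm_cons, hperm, ← mul_assoc, Equiv.swap_mul_self, one_mul]

theorem IsReducedWord.inv_apply_succ_lt (h : IsReducedWord n w (i :: rest)) :
    w⁻¹ (i + 1) < w⁻¹ i := by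
  have hi := h.1 i List.mem_cons_self
  have hw := h.mem_symmIcc
  by_contra hle
  have hlt : w⁻¹ i < w⁻¹ (i + 1) := lt_of_le_of_ne (not_lt.1 hle) (w⁻¹.injective.ne (by omega))
  have := card_inversions_swap_mul_of_lt hw hi.1 hi.2 hlt
  have := h.length_eq
  have := h.tail.length_eq
  simp only [List.length_cons] at *
  omega

theorem IsReducedWord.succ_mem_image (h : IsReducedWord n w (i :: rest))
    (hi : i ∈ (Icc 1 k).image w) : i + 1 ∈ (Icc 1 k).image w := by
  have hw := h.mem_symmIcc
  have hi₁ := h.1 i List.mem_cons_self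
  have hd := h.inv_apply_succ_lt
  have hpos := (apply_mem_Icc_iff (inv_mem hw) (x := i + 1)).2 (by omega)
  obtain ⟨a, ha, rfl⟩ := mem_image.1 hi
  rw [mem_Icc] at ha
  refine mem_image.2 ⟨w⁻¹ (w a + 1), mem_Icc.2 ⟨hpos.1, ?_⟩, by simp⟩
  simp only [Equiv.Perm.coe_inv, Equiv.symm_apply_apply] at hd hpos ⊢
  omega

end Permutations

section KDemazure

variable {n k : ℕ} {t : Filling} {w : Equiv.Perm ℕ} {word : List ℕ}

theorem card_filter_Icc_lt (k a : ℕ) : #{x ∈ Icc 1 k | x < a} = min k (a - 1) := by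
  have : {x ∈ Icc 1 k | x < a} = Icc 1 (min k (a - 1)) := by
    ext x
    simp only [mem_filter, mem_Icc]
    omega
  rw [this, Nat.card_Icc, Nat.add_sub_cancel]

theorem belowKey_Icc_iff (ht : IsSVT n (colShape k) t) :
    BelowKey (Icc 1 k) t ↔ t = uTab (colShape k) := by
  refine ⟨fun h => funext fun r => funext fun c => ?_, ?_⟩
  · by_cases hc : c < colShape k r
    · obtain ⟨hr, rfl⟩ := lt_colShape_iff.1 hc
      have hrow : ∀ a ∈ t r 0, a = r + 1 := fun a ha => by
        have := ht.row_lt_entry ha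
        have := card_filter_Icc_lt k a ▸ h r a ha
        omega
      obtain ⟨a, ha⟩ := ht.nonempty_colShape hr
      rw [uTab, if_pos hc, eq_singleton_iff_unique_mem]
      exact ⟨hrow a ha ▸ ha, hrow⟩
    · rw [uTab, if_neg hc, ht.emptyOutside r c hc]
  · rintro rfl r a ha
    unfold uTab at ha
    split_ifs at ha with hc
    · rw [mem_singleton.1 ha, card_filter_Icc_lt]
      omega
    · exact absurd ha (notMem_empty a)

theorem demReach_colShape_iff (hred : IsReducedWord n w word) (ht : IsSVT n (colShape k) t) :
    DemReach n (colShape k) (eK n (colShape k)) word t (uTab (colShape k)) ↔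
      BelowKey ((Icc 1 k).image w) t := by
  induction word generalizing w t with
  | nil =>
    obtain rfl : w = 1 := hred.2.1.symm
    simpa [DemReach, eq_comm] using (belowKey_Icc_iff ht).symm
  | cons i rest ih =>
    have hcard : #((Icc 1 k).image w) = k := by
      rw [card_image_of_injective _ w.injective, Nat.card_Icc, Nat.add_sub_cancel]
    obtain ⟨D, hD, hstep, hkey⟩ := exists_demStep_colShape ht (hred.1 i List.mem_cons_self).1
      hred.succ_mem_image hcard
    have himage : (Icc 1 k).image (Equiv.swap i (i + 1) * w) =
        ((Icc 1 k).image w).image (Equiv.swap i (i + 1)) := by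
      rw [image_image]
      rfl
    simp only [DemReach, hstep, exists_eq_left]
    rw [ih hred.tail hD, himage, hkey]

theorem kDem_colShape_eq (hred : IsReducedWord n w word) :
    KDem n (colShape k) (eK n (colShape k)) word =
      {t | IsSVT n (colShape k) t ∧ BelowKey ((Icc 1 k).image w) t} := by
  ext t
  exact and_congr_right fun ht => demReach_colShape_iff hred ht

end KDemazure

theorem kdem_column_well_defined_general (n k : ℕ)
    (w : Equiv.Perm ℕ) (word word' : List ℕ)
    (h : IsReducedWord n w word) (h' : IsReducedWord n w word') :
    KDem n (colShape k) (eK n (colShape k)) word =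
      KDem n (colShape k) (eK n (colShape k)) word' := by
  rw [kDem_colShape_eq h, kDem_colShape_eq h']

/-- for the one-column shape `(1ᵏ)`, the K-Demazure crystal of a reduced
word of `w ∈ Sₙ` does not depend on the choice of reduced word. -/
theorem kdem_column_well_defined (n k : ℕ) (hn : 2 ≤ n) (hk1 : 1 ≤ k) (hkn : k ≤ n)
    (w : Equiv.Perm ℕ) (word word' : List ℕ)
    (h : IsReducedWord n w word) (h' : IsReducedWord n w word') :
    KDem n (colShape k) (eK n (colShape k)) word =
      KDem n (colShape k) (eK n (colShape k)) word' :=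
  kdem_column_well_defined_general n k w word word' h h'

end SVTCrystal

end
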